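/- arXiv:1304.5586 — 5 statements merged into one kernel-verified Lean document; each statement's English description precedes it below -/
import Mathlib

section
/- For every y in (0,1) and x in [0,1], the infinite product ∏_{i=0}^{∞} (1 - x y^i) is bounded below by (1-x)^{1 - 1/log y}. -/
/-!
Bernoulli's inequality `(1 - x) ^ t ≤ 1 - x t` for `t ∈ [0, 1]` bounds each factor from below by
`(1 - x) ^ (y ^ i)`, so every partial product is at least
`(1 - x) ^ (∑ y ^ i) ≥ (1 - x) ^ (1 - y)⁻¹`. It remains to compare exponents:
`log (1 / y) ≤ 1 / y - 1` gives `(1 - y)⁻¹ ≤ 1 - 1 / log y`.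
-/

open Real Finset

lemma one_sub_rpow_le_one_sub_mul {x t : ℝ} (hx : x ≤ 1) (ht0 : 0 ≤ t) (ht1 : t ≤ 1) :
    (1 - x) ^ t ≤ 1 - x * t := by
  simpa [sub_eq_add_neg, mul_comm] using
    rpow_one_add_le_one_add_mul_self (s := -x) (by linarith) ht0 ht1

lemma one_sub_rpow_sum_le_prod {ι : Type*} (s : Finset ι) {x : ℝ} (hx : x ≤ 1)
    {t : ι → ℝ} (ht0 : ∀ i, 0 ≤ t i) (ht1 : ∀ i, t i ≤ 1) :
    (1 - x) ^ (∑ i ∈ s, t i) ≤ ∏ i ∈ s, (1 - x * t i) := by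
  rw [rpow_sum_of_nonneg (by linarith) fun i _ => ht0 i]
  exact prod_le_prod (fun i _ => by positivity)
    fun i _ => one_sub_rpow_le_one_sub_mul hx (ht0 i) (ht1 i)

lemma inv_one_sub_le_one_sub_one_div_log {y : ℝ} (hy0 : 0 < y) (hy1 : y < 1) :
    (1 - y)⁻¹ ≤ 1 - 1 / log y := by
  have hlog : 0 < -log y := neg_pos.mpr (log_neg hy0 hy1)
  have hbound : y * -log y ≤ 1 - y := by
    have h := mul_le_mul_of_nonneg_left (log_le_sub_one_of_pos (inv_pos.mpr hy0)) hy0.le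
    rwa [log_inv, mul_sub, mul_inv_cancel₀ hy0.ne', mul_one] at h
  calc (1 - y)⁻¹ = 1 + y / (1 - y) := by field_simp [(sub_pos.mpr hy1).ne']; ring
    _ ≤ 1 + 1 / -log y := by
        rwa [add_le_add_iff_left, div_le_div_iff₀ (by linarith) hlog, one_mul]
    _ = 1 - 1 / log y := by rw [div_neg, sub_eq_add_neg]

/-- For every `y ∈ (0,1)` and `x ∈ [0,1]`, the infinite product `∏_{i=0}^∞ (1 - x y^i)`
is bounded below by `(1-x)^(1 - 1/log y)`. -/
theorem stmt0 (x y : ℝ) (hy : y ∈ Set.Ioo (0:ℝ) 1) (hx : x ∈ Set.Icc (0:ℝ) 1) :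
    (1 - x) ^ (1 - 1 / Real.log y) ≤ ∏' i : ℕ, (1 - x * y ^ i) := by
  obtain ⟨hy0, hy1⟩ := hy
  obtain ⟨hx0, hx1⟩ := hx
  have hpow0 (i : ℕ) : 0 ≤ y ^ i := pow_nonneg hy0.le i
  have hgeom := summable_geometric_of_lt_one hy0.le hy1
  have hmul : Multipliable fun i : ℕ => 1 - x * y ^ i := by
    simpa [sub_eq_add_neg] using Real.multipliable_one_add_of_summable (hgeom.mul_left x).neg
  have hpartial (s : Finset ℕ) : (1 - x) ^ (1 - y)⁻¹ ≤ ∏ i ∈ s, (1 - x * y ^ i) := by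
    have hsum : ∑ i ∈ s, y ^ i ≤ (1 - y)⁻¹ := by
      rw [← tsum_geometric_of_lt_one hy0.le hy1]
      exact hgeom.sum_le_tsum s fun i _ => hpow0 i
    calc (1 - x) ^ (1 - y)⁻¹ ≤ (1 - x) ^ (∑ i ∈ s, y ^ i) :=
          rpow_le_rpow_of_exponent_ge' (by linarith) (by linarith) (sum_nonneg fun i _ => hpow0 i)
            hsum
      _ ≤ ∏ i ∈ s, (1 - x * y ^ i) :=
          one_sub_rpow_sum_le_prod s hx1 hpow0 fun i => pow_le_one₀ hy0.le hy1.le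
  calc (1 - x) ^ (1 - 1 / log y) ≤ (1 - x) ^ (1 - y)⁻¹ :=
        rpow_le_rpow_of_exponent_ge' (by linarith) (by linarith) (inv_nonneg.mpr (by linarith))
          (inv_one_sub_le_one_sub_one_div_log hy0 hy1)
    _ ≤ ∏' i : ℕ, (1 - x * y ^ i) :=
        ge_of_tendsto hmul.hasProd (Filter.Eventually.of_forall hpartial)
end

section
/- For every y in (0,1), x in [0,1), and natural number N, the finite product ∏_{i=0}^{N} (1 - x y^i) is bounded below by exp(-(log(1 - x/y) - log(1 - x y^{N+1}))/log y), provided x/y < 1. -/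
/-!
With `u = x yⁱ`, each factor satisfies `log y · log (1 - u) ≤ log (1 - u) - log (1 - u / y)`:
both `-log y` and `-log (1 - u)` are bounded by `t⁻¹ - 1` for their arguments `t`, and the product
of these two bounds is exactly `1 - (1 - u / y) / (1 - u) ≤ -log ((1 - u / y) / (1 - u))`.
Since `x yⁱ / y = x yⁱ⁻¹`, summing over `i` telescopes, and dividing by `log y < 0` and
exponentiating gives the bound.
-/

open Real Finset

lemma log_mul_log_one_sub_le {y u : ℝ} (hy0 : 0 < y) (hy1 : y ≤ 1) (hu : 0 ≤ u)
    (huy : u / y < 1) :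
    log y * log (1 - u) ≤ log (1 - u) - log (1 - u / y) := by
  have hu_le : u ≤ u / y := le_div_self hu hy0 hy1
  have h1u : 0 < 1 - u := by linarith
  have h1uy : 0 < 1 - u / y := by linarith
  have hlogy : -log y ≤ y⁻¹ - 1 := by linarith [one_sub_inv_le_log_of_pos hy0]
  have hlogu : -log (1 - u) ≤ (1 - u)⁻¹ - 1 := by linarith [one_sub_inv_le_log_of_pos h1u]
  have hlogu_nonneg : 0 ≤ -log (1 - u) := neg_nonneg.mpr (log_nonpos h1u.le (by linarith))
  have hy_inv : 0 ≤ y⁻¹ - 1 := sub_nonneg.mpr (one_le_inv₀ hy0 |>.mpr hy1)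
  have hratio : log ((1 - u / y) / (1 - u)) ≤ (1 - u / y) / (1 - u) - 1 :=
    log_le_sub_one_of_pos (div_pos h1uy h1u)
  rw [log_div h1uy.ne' h1u.ne'] at hratio
  have hprod : (y⁻¹ - 1) * ((1 - u)⁻¹ - 1) = 1 - (1 - u / y) / (1 - u) := by
    field_simp
    ring
  nlinarith [mul_le_mul hlogy hlogu hlogu_nonneg hy_inv]

lemma log_mul_sum_log_one_sub_mul_pow_le {x y : ℝ} (hy0 : 0 < y) (hy1 : y ≤ 1) (hx : 0 ≤ x)
    (hxy : x / y < 1) (n : ℕ) :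
    log y * ∑ i ∈ range n, log (1 - x * y ^ i) ≤ log (1 - x * y ^ n / y) - log (1 - x / y) := by
  have hterm : ∀ i ∈ range n, log y * log (1 - x * y ^ i) ≤
      log (1 - x * y ^ (i + 1) / y) - log (1 - x * y ^ i / y) := by
    intro i _
    have hshift : x * y ^ (i + 1) / y = x * y ^ i := by
      rw [pow_succ, ← mul_assoc, mul_div_cancel_right₀ _ hy0.ne']
    have hsmall : x * y ^ i / y ≤ x / y := by
      gcongr
      exact mul_le_of_le_one_right hx (pow_le_one₀ hy0.le hy1)
    rw [hshift]
    exact log_mul_log_one_sub_le hy0 hy1 (by positivity) (hsmall.trans_lt hxy)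
  calc log y * ∑ i ∈ range n, log (1 - x * y ^ i)
      ≤ ∑ i ∈ range n, (log (1 - x * y ^ (i + 1) / y) - log (1 - x * y ^ i / y)) := by
        rw [mul_sum]
        exact sum_le_sum hterm
    _ = log (1 - x * y ^ n / y) - log (1 - x / y) := by
        rw [sum_range_sub (fun i => log (1 - x * y ^ i / y)), pow_zero, mul_one]

/-- For `y ∈ (0,1)`, `x ∈ [0,1)` with `x/y < 1`, and `N : ℕ`, the finite product
`∏_{i=0}^{N} (1 - x y^i)` is bounded below by
`exp(-(log(1 - x/y) - log(1 - x y^{N+1})) / log y)`. -/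
theorem stmt1 (x y : ℝ) (N : ℕ) (hy : y ∈ Set.Ioo (0:ℝ) 1) (hx : x ∈ Set.Ico (0:ℝ) 1)
    (hxy : x / y < 1) :
    Real.exp (-(Real.log (1 - x / y) - Real.log (1 - x * y ^ (N + 1))) / Real.log y) ≤
      ∏ i ∈ Finset.range (N + 1), (1 - x * y ^ i) := by
  obtain ⟨hy0, hy1⟩ := hy
  obtain ⟨hx0, hx1⟩ := hx
  have hpow_le : y ^ (N + 1) ≤ 1 := pow_le_one₀ hy0.le hy1.le
  have hfactor_pos : ∀ i ∈ range (N + 1), 0 < 1 - x * y ^ i := fun i _ => by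
    linarith [mul_le_of_le_one_right hx0 (pow_le_one₀ (n := i) hy0.le hy1.le)]
  have htail : log (1 - x * y ^ (N + 1) / y) ≤ log (1 - x * y ^ (N + 1)) := by
    have hsmall : x * y ^ (N + 1) / y < 1 :=
      (div_le_div_of_nonneg_right (mul_le_of_le_one_right hx0 hpow_le) hy0.le).trans_lt hxy
    refine log_le_log (by linarith) (sub_le_sub_left ?_ 1)
    exact le_div_self (by positivity) hy0 hy1.le
  have hsum := log_mul_sum_log_one_sub_mul_pow_le hy0 hy1.le hx0 hxy (N + 1)
  rw [← le_log_iff_exp_le (prod_pos hfactor_pos), log_prod fun i hi => (hfactor_pos i hi).ne',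
    neg_sub, div_le_iff_of_neg (log_neg hy0 hy1)]
  linarith
end

section
/- Let X = (X₁, ..., Xₙ) be a random n-vector and ν > 0 such that for each coordinate i, Pr(|Xᵢ| ≥ ε) ≤ exp(-ε²/ν) for all ε > 0. Then for every θ ∈ [0, 1/(νn)), E[exp(θ‖X‖²)] ≤ 1/(1 - θνn), where ‖X‖² = ∑ᵢ Xᵢ². -/
/-!
Since `exp` is convex, writing `θ‖X‖² = ∑ᵢ (1/n) (θn Xᵢ²)` gives
`exp (θ‖X‖²) ≤ (1/n) ∑ᵢ exp (θn Xᵢ²)`, so it suffices to bound the moment generating function of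
each `Xᵢ²` at `c = θn`. For that, the tail bound turns into `Pr(exp (c Xᵢ²) > t) ≤ t^(-1/(cν))`
for `t > 1`, and the layer-cake formula gives
`E[exp (c Xᵢ²)] ≤ 1 + ∫_1^∞ t^(-1/(cν)) dt = 1/(1 - cν)`.
-/

open MeasureTheory Set Real

theorem exp_sum_le_inv_card_mul_sum_exp {ι : Type*} [Fintype ι] [Nonempty ι] (a : ι → ℝ) :
    exp (∑ i, a i) ≤ (Fintype.card ι : ℝ)⁻¹ * ∑ i, exp (Fintype.card ι * a i) := by
  have hcard : (Fintype.card ι : ℝ) ≠ 0 := Nat.cast_ne_zero.mpr Fintype.card_ne_zero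
  have hweights : ∑ _i : ι, (Fintype.card ι : ℝ)⁻¹ = 1 := by
    simp [Finset.card_univ, hcard]
  have := convexOn_exp.map_sum_le (t := Finset.univ) (fun _ _ => by positivity) hweights
    (fun i _ => mem_univ (Fintype.card ι * a i))
  simpa only [smul_eq_mul, inv_mul_cancel_left₀ hcard, Finset.mul_sum] using this

theorem lintegral_Ioi_one_ofReal_rpow_neg {p : ℝ} (hp : 1 < p) :
    ∫⁻ t in Ioi (1 : ℝ), ENNReal.ofReal (t ^ (-p)) = ENNReal.ofReal (1 / (p - 1)) := by
  rw [← ofReal_integral_eq_lintegral_ofReal (integrableOn_Ioi_rpow_of_lt (by linarith) one_pos)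
    (ae_restrict_of_forall_mem measurableSet_Ioi fun t ht =>
      rpow_nonneg (by linarith [mem_Ioi.mp ht]) _),
    integral_Ioi_rpow_of_lt (by linarith) one_pos, one_rpow, show -p + 1 = -(p - 1) by ring,
    neg_div_neg_eq]

section

variable {Ω : Type*} [MeasurableSpace Ω] {μ : Measure Ω}

theorem lintegral_ofReal_le_measure_univ_add_setLIntegral_Ioi_one {f : Ω → ℝ}
    (hf_nn : ∀ ω, 0 ≤ f ω) (hf : AEMeasurable f μ) :
    ∫⁻ ω, ENNReal.ofReal (f ω) ∂μ ≤ μ univ + ∫⁻ t in Ioi 1, μ {ω | t < f ω} := by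
  rw [lintegral_eq_lintegral_meas_lt μ (ae_of_all _ hf_nn) hf,
    ← Ioc_union_Ioi_eq_Ioi zero_le_one, lintegral_union measurableSet_Ioi Ioc_disjoint_Ioi_same]
  gcongr
  calc ∫⁻ t in Ioc (0 : ℝ) 1, μ {ω | t < f ω}
      ≤ ∫⁻ _ in Ioc (0 : ℝ) 1, μ univ := lintegral_mono fun _ => measure_mono (subset_univ _)
    _ = μ univ := by simp [volume_Ioc]

theorem measure_lt_exp_mul_sq_le_rpow {Y : Ω → ℝ} {ν c t : ℝ}
    (htail : ∀ ε : ℝ, 0 < ε → μ {ω | ε ≤ |Y ω|} ≤ ENNReal.ofReal (exp (-ε ^ 2 / ν)))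
    (hc : 0 < c) (ht : 1 < t) :
    μ {ω | t < exp (c * Y ω ^ 2)} ≤ ENNReal.ofReal (t ^ (-(c * ν)⁻¹)) := by
  have hlog : 0 < log t / c := div_pos (log_pos ht) hc
  have hsubset : {ω | t < exp (c * Y ω ^ 2)} ⊆ {ω | √(log t / c) ≤ |Y ω|} := by
    intro ω hω
    have : log t < c * Y ω ^ 2 := (log_lt_iff_lt_exp (by linarith)).mpr hω
    show √(log t / c) ≤ |Y ω|
    rw [← sqrt_sq_eq_abs]
    exact sqrt_le_sqrt ((div_le_iff₀' hc).mpr this.le)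
  calc μ {ω | t < exp (c * Y ω ^ 2)}
      ≤ ENNReal.ofReal (exp (-√(log t / c) ^ 2 / ν)) :=
        (measure_mono hsubset).trans (htail _ (sqrt_pos.mpr hlog))
    _ = ENNReal.ofReal (t ^ (-(c * ν)⁻¹)) := by
        rw [sq_sqrt hlog.le, rpow_def_of_pos (by linarith), mul_inv]
        ring_nf

theorem lintegral_exp_mul_sq_le_of_tail [IsProbabilityMeasure μ] {Y : Ω → ℝ} (hY : Measurable Y)
    {ν c : ℝ} (hν : 0 < ν)
    (htail : ∀ ε : ℝ, 0 < ε → μ {ω | ε ≤ |Y ω|} ≤ ENNReal.ofReal (exp (-ε ^ 2 / ν)))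
    (hc : 0 ≤ c) (hcν : c * ν < 1) :
    ∫⁻ ω, ENNReal.ofReal (exp (c * Y ω ^ 2)) ∂μ ≤ ENNReal.ofReal (1 / (1 - c * ν)) := by
  rcases hc.eq_or_lt with rfl | hc
  · simp
  have hcν_pos : 0 < c * ν := mul_pos hc hν
  calc ∫⁻ ω, ENNReal.ofReal (exp (c * Y ω ^ 2)) ∂μ
      ≤ μ univ + ∫⁻ t in Ioi 1, μ {ω | t < exp (c * Y ω ^ 2)} :=
        lintegral_ofReal_le_measure_univ_add_setLIntegral_Ioi_one (fun _ => (exp_pos _).le)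
          (by fun_prop)
    _ ≤ 1 + ∫⁻ t in Ioi 1, ENNReal.ofReal (t ^ (-(c * ν)⁻¹)) := by
        rw [measure_univ]
        gcongr 1 + ?_
        exact setLIntegral_mono' measurableSet_Ioi fun t ht =>
          measure_lt_exp_mul_sq_le_rpow htail hc ht
    _ = ENNReal.ofReal (1 / (1 - c * ν)) := by
        have hp : 1 < (c * ν)⁻¹ := (one_lt_inv₀ hcν_pos).mpr hcν
        rw [lintegral_Ioi_one_ofReal_rpow_neg hp, ← ENNReal.ofReal_one,
          ← ENNReal.ofReal_add zero_le_one (by simp only [one_div, inv_nonneg]; linarith)]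
        congr 1
        have : 1 - c * ν ≠ 0 := by linarith
        field_simp
        ring

theorem lintegral_exp_sum_le_inv_card_mul_sum {ι : Type*} [Fintype ι] [Nonempty ι]
    {f : ι → Ω → ℝ} (hf : ∀ i, AEMeasurable (f i) μ) :
    ∫⁻ ω, ENNReal.ofReal (exp (∑ i, f i ω)) ∂μ ≤
      (Fintype.card ι : ENNReal)⁻¹ *
        ∑ i, ∫⁻ ω, ENNReal.ofReal (exp (Fintype.card ι * f i ω)) ∂μ := by
  have hcard : (0 : ℝ) < Fintype.card ι := Nat.cast_pos.mpr Fintype.card_pos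
  calc ∫⁻ ω, ENNReal.ofReal (exp (∑ i, f i ω)) ∂μ
      ≤ ∫⁻ ω, ENNReal.ofReal ((Fintype.card ι : ℝ)⁻¹ *
          ∑ i, exp (Fintype.card ι * f i ω)) ∂μ :=
        lintegral_mono fun ω => ENNReal.ofReal_le_ofReal (exp_sum_le_inv_card_mul_sum_exp _)
    _ = ∫⁻ ω, (Fintype.card ι : ENNReal)⁻¹ *
          ∑ i, ENNReal.ofReal (exp (Fintype.card ι * f i ω)) ∂μ := by
        simp only [ENNReal.ofReal_mul (inv_nonneg.mpr hcard.le), ENNReal.ofReal_inv_of_pos hcard,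
          ENNReal.ofReal_natCast, ENNReal.ofReal_sum_of_nonneg fun i _ => (exp_pos _).le]
    _ = _ := by
        rw [lintegral_const_mul'' _ (Finset.aemeasurable_fun_sum _ fun i _ => by fun_prop),
          lintegral_finsetSum' _ fun i _ => by fun_prop]

end

theorem stmt5_general {Ω : Type*} [MeasurableSpace Ω] (μ : Measure Ω) [IsProbabilityMeasure μ]
    (n : ℕ) (X : Ω → Fin n → ℝ) (hX : Measurable X)
    (ν : ℝ)
    (htail : ∀ i : Fin n, ∀ ε : ℝ, 0 < ε →
      μ {ω | ε ≤ |X ω i|} ≤ ENNReal.ofReal (Real.exp (-ε ^ 2 / ν)))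
    (θ : ℝ) (hθ : θ ∈ Set.Ico 0 (1 / (ν * n))) :
    ∫⁻ ω, ENNReal.ofReal (Real.exp (θ * ∑ i, X ω i ^ 2)) ∂μ ≤
      ENNReal.ofReal (1 / (1 - θ * ν * n)) := by
  obtain ⟨hθ_nn, hθ_lt⟩ := hθ
  have hνn : 0 < ν * n := one_div_pos.mp (hθ_nn.trans_lt hθ_lt)
  have hν : 0 < ν := pos_of_mul_pos_left hνn n.cast_nonneg
  have hn : 0 < n := Nat.cast_pos.mp (pos_of_mul_pos_right hνn hν.le)
  have : Nonempty (Fin n) := Fin.pos_iff_nonempty.mp hn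
  have hcν : n * θ * ν < 1 := by
    have := (lt_div_iff₀ hνn).mp hθ_lt
    linarith
  have hmgf (i : Fin n) :
      ∫⁻ ω, ENNReal.ofReal (exp (n * (θ * X ω i ^ 2))) ∂μ ≤
        ENNReal.ofReal (1 / (1 - n * θ * ν)) := by
    simp_rw [← mul_assoc]
    exact lintegral_exp_mul_sq_le_of_tail (by fun_prop) hν (htail i)
      (mul_nonneg n.cast_nonneg hθ_nn) hcν
  calc ∫⁻ ω, ENNReal.ofReal (exp (θ * ∑ i, X ω i ^ 2)) ∂μ
      ≤ (n : ENNReal)⁻¹ * ∑ i : Fin n, ∫⁻ ω, ENNReal.ofReal (exp (n * (θ * X ω i ^ 2))) ∂μ := by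
        simpa only [Finset.mul_sum, Fintype.card_fin] using
          lintegral_exp_sum_le_inv_card_mul_sum (μ := μ) (f := fun i ω => θ * X ω i ^ 2)
            fun i => by fun_prop
    _ ≤ (n : ENNReal)⁻¹ * ∑ _i : Fin n, ENNReal.ofReal (1 / (1 - n * θ * ν)) := by
        gcongr with i
        exact hmgf i
    _ = ENNReal.ofReal (1 / (1 - θ * ν * n)) := by
        rw [Finset.sum_const, Finset.card_univ, Fintype.card_fin, nsmul_eq_mul, ← mul_assoc,
          ENNReal.inv_mul_cancel (by exact_mod_cast hn.ne') (ENNReal.natCast_ne_top n), one_mul]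
        ring_nf

/-- If each coordinate of a random `n`-vector `X` satisfies the sub-Gaussian tail bound
`Pr(|Xᵢ| ≥ ε) ≤ exp(-ε²/ν)` for all `ε > 0`, then for every `θ ∈ [0, 1/(νn))`,
`E[exp(θ ‖X‖²)] ≤ 1/(1 - θνn)`, where `‖X‖² = ∑ᵢ Xᵢ²`. -/
theorem stmt5 {Ω : Type*} [MeasurableSpace Ω] (μ : Measure Ω) [IsProbabilityMeasure μ]
    (n : ℕ) (hn : 0 < n) (X : Ω → Fin n → ℝ) (hX : Measurable X)
    (ν : ℝ) (hν : 0 < ν)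
    (htail : ∀ i : Fin n, ∀ ε : ℝ, 0 < ε →
      μ {ω | ε ≤ |X ω i|} ≤ ENNReal.ofReal (Real.exp (-ε ^ 2 / ν)))
    (θ : ℝ) (hθ : θ ∈ Set.Ico 0 (1 / (ν * n))) :
    ∫⁻ ω, ENNReal.ofReal (Real.exp (θ * ∑ i, X ω i ^ 2)) ∂μ ≤
      ENNReal.ofReal (1 / (1 - θ * ν * n)) :=
  stmt5_general μ n X hX ν htail θ hθ
end

section
/- Let h = f + g with f differentiable with L-Lipschitz gradient and g convex lower-semicontinuous, and let x_{k+1} = prox_{(1/L)g}(x_k - (1/L)(∇f(x_k) + e_k)). Then h(x_{k+1}) ≤ h(x_k) + (1/L)‖e_k‖² - (L/4)‖x_k - x_{k+1}‖². -/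
/-!
Minimality of `x'` gives `⟪u - x', x_k - x'⟫ ≤ (g x_k - g x') / L` for the shifted point
`u = x_k - (∇f(x_k) + e) / L`. Adding `L` times this to the descent lemma at `x_k` cancels the
gradient terms and leaves `⟪e, x_k - x'⟫ - (L/2)‖x_k - x'‖²`, and Young's inequality
`⟪e, v⟫ ≤ ‖e‖² / L + (L/4)‖v‖²` absorbs the error term.
-/

open Set Filter Topology
open scoped RealInnerProductSpace

section InnerProductSpace

variable {E : Type*} [NormedAddCommGroup E] [InnerProductSpace ℝ E]

lemma real_inner_le_inv_mul_norm_sq_add {c : ℝ} (hc : 0 < c) (x y : E) :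
    ⟪x, y⟫ ≤ 1 / c * ‖x‖ ^ 2 + c / 4 * ‖y‖ ^ 2 := by
  have hyoung : ‖x‖ * ‖y‖ ≤ 1 / c * ‖x‖ ^ 2 + c / 4 * ‖y‖ ^ 2 := by
    field_simp
    nlinarith [sq_nonneg (2 * ‖x‖ - c * ‖y‖)]
  exact (real_inner_le_norm x y).trans hyoung

lemma nonneg_of_forall_mem_Ioc_nonneg_add_mul {A B : ℝ}
    (h : ∀ t ∈ Ioc (0 : ℝ) 1, 0 ≤ A + t * B) : 0 ≤ A := by
  have hlim : Tendsto (fun t : ℝ => A + t * B) (𝓝[>] 0) (𝓝 A) :=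
    tendsto_nhdsWithin_of_tendsto_nhds (Continuous.tendsto' (by fun_prop) 0 A (by simp))
  refine ge_of_tendsto hlim ?_
  filter_upwards [Ioc_mem_nhdsGT one_pos] with t ht using h t ht

/-- `u - x'` is a subgradient of `φ` at the proximal point `x'` of `u`. -/
theorem ConvexOn.inner_sub_le_sub_of_isMinOn {s : Set E} {φ : E → ℝ} (hφ : ConvexOn ℝ s φ)
    {u x' z : E} (hmin : IsMinOn (fun y => φ y + 1 / 2 * ‖y - u‖ ^ 2) s x') (hx' : x' ∈ s)
    (hz : z ∈ s) : ⟪u - x', z - x'⟫ ≤ φ z - φ x' := by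
  suffices 0 ≤ φ z - φ x' - ⟪u - x', z - x'⟫ by linarith
  refine nonneg_of_forall_mem_Ioc_nonneg_add_mul (B := ‖z - x'‖ ^ 2 / 2) fun t ⟨ht0, ht1⟩ => ?_
  have hmem : x' + t • (z - x') ∈ s := hφ.1.add_smul_sub_mem hx' hz ⟨ht0.le, ht1⟩
  have hconv : φ (x' + t • (z - x')) ≤ (1 - t) * φ x' + t * φ z := by
    have := hφ.2 hx' hz (sub_nonneg.2 ht1) ht0.le (by ring)
    rwa [smul_eq_mul, smul_eq_mul, show (1 - t) • x' + t • z = x' + t • (z - x') by module]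
      at this
  have hexpand : ‖x' + t • (z - x') - u‖ ^ 2 =
      ‖x' - u‖ ^ 2 - 2 * t * ⟪u - x', z - x'⟫ + t ^ 2 * ‖z - x'‖ ^ 2 := by
    rw [show x' + t • (z - x') - u = (x' - u) + t • (z - x') by abel, norm_add_sq_real,
      inner_smul_right, norm_smul, mul_pow, Real.norm_eq_abs, sq_abs,
      show x' - u = -(u - x') by abel, inner_neg_left, norm_neg]
    ring
  have hmin_t := isMinOn_iff.1 hmin _ hmem
  simp only [hexpand] at hmin_t
  have : 0 ≤ t * (φ z - φ x' - ⟪u - x', z - x'⟫ + t * (‖z - x'‖ ^ 2 / 2)) := by linarith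
  exact (mul_nonneg_iff_of_pos_left ht0).1 this

end InnerProductSpace

section Gradient

variable {E : Type*} [NormedAddCommGroup E] [InnerProductSpace ℝ E] [CompleteSpace E]

lemma HasGradientAt.hasDerivAt_add_smul {f : E → ℝ} {g x d : E} {t : ℝ}
    (hf : HasGradientAt f g (x + t • d)) : HasDerivAt (fun t : ℝ => f (x + t • d)) ⟪g, d⟫ t := by
  have hline : HasDerivAt (fun t : ℝ => x + t • d) d t := by
    simpa using ((hasDerivAt_id t).smul_const d).const_add x
  simpa only [InnerProductSpace.toDual_apply_apply, Function.comp_def] using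
    hf.hasFDerivAt.comp_hasDerivAt t hline

theorem le_add_inner_add_sq_of_lipschitz_gradient {f : E → ℝ} {f' : E → E} {L : ℝ}
    (hf : ∀ x, HasGradientAt f (f' x) x) (hlip : ∀ x y, ‖f' x - f' y‖ ≤ L * ‖x - y‖)
    (x y : E) : f y ≤ f x + ⟪f' x, y - x⟫ + L / 2 * ‖y - x‖ ^ 2 := by
  set d := y - x
  have hderiv (t : ℝ) : HasDerivAt (fun t : ℝ => f (x + t • d)) ⟪f' (x + t • d), d⟫ t :=
    (hf (x + t • d)).hasDerivAt_add_smul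
  have hbound (t : ℝ) : HasDerivAt (fun t => f x + t * ⟪f' x, d⟫ + L / 2 * t ^ 2 * ‖d‖ ^ 2)
      (⟪f' x, d⟫ + L * t * ‖d‖ ^ 2) t := by
    refine (((hasDerivAt_id t).mul_const ⟪f' x, d⟫).const_add (f x)).add
      (((hasDerivAt_pow 2 t).const_mul (L / 2)).mul_const (‖d‖ ^ 2)) |>.congr_deriv ?_
    simp only [Nat.cast_ofNat]
    ring
  have key := image_le_of_deriv_right_le_deriv_boundary (a := 0) (b := 1)
    (fun t _ => (hderiv t).continuousAt.continuousWithinAt)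
    (fun t _ => (hderiv t).hasDerivWithinAt) (by simp)
    (fun t _ => (hbound t).continuousAt.continuousWithinAt)
    (fun t _ => (hbound t).hasDerivWithinAt) ?_ (right_mem_Icc.2 zero_le_one)
  · simpa [d] using key
  intro t ⟨ht0, _⟩
  have hlip_t : ‖f' (x + t • d) - f' x‖ ≤ L * t * ‖d‖ := by
    simpa [norm_smul, abs_of_nonneg ht0, mul_assoc] using hlip (x + t • d) x
  have hcs := real_inner_le_norm (f' (x + t • d) - f' x) d
  rw [inner_sub_left] at hcs
  have := mul_le_mul_of_nonneg_right hlip_t (norm_nonneg d)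
  linarith

end Gradient

theorem stmt13_general {n : ℕ} (f : EuclideanSpace ℝ (Fin n) → ℝ)
    (f' : EuclideanSpace ℝ (Fin n) → EuclideanSpace ℝ (Fin n)) (L : ℝ) (hL : 0 < L)
    (hf : ∀ x, HasGradientAt f (f' x) x)
    (hlip : ∀ x y, ‖f' x - f' y‖ ≤ L * ‖x - y‖)
    (s : Set (EuclideanSpace ℝ (Fin n)))
    (g : EuclideanSpace ℝ (Fin n) → ℝ) (hg : ConvexOn ℝ s g)
    (xk e x' : EuclideanSpace ℝ (Fin n)) (hxk : xk ∈ s) (hx' : x' ∈ s)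
    (hmin : ∀ z ∈ s,
      (1 / L) * g x' + (1 / 2) * ‖x' - (xk - (1 / L) • (f' xk + e))‖ ^ 2 ≤
        (1 / L) * g z + (1 / 2) * ‖z - (xk - (1 / L) • (f' xk + e))‖ ^ 2) :
    f x' + g x' ≤ f xk + g xk + (1 / L) * ‖e‖ ^ 2 - (L / 4) * ‖xk - x'‖ ^ 2 := by
  set u := xk - (1 / L) • (f' xk + e)
  have hprox : ⟪u - x', xk - x'⟫ ≤ 1 / L * g xk - 1 / L * g x' :=
    (hg.smul (one_div_pos.2 hL).le).inner_sub_le_sub_of_isMinOn (isMinOn_iff.2 hmin) hx' hxk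
  have hinner : ⟪u - x', xk - x'⟫ =
      ‖xk - x'‖ ^ 2 - 1 / L * (⟪f' xk, xk - x'⟫ + ⟪e, xk - x'⟫) := by
    rw [show u - x' = (xk - x') - (1 / L) • (f' xk + e) by simp only [u]; abel, inner_sub_left,
      real_inner_self_eq_norm_sq, inner_smul_left, inner_add_left]
    simp
  have hdescent := le_add_inner_add_sq_of_lipschitz_gradient hf hlip xk x'
  rw [← neg_sub, inner_neg_right, norm_neg] at hdescent
  have hyoung := real_inner_le_inv_mul_norm_sq_add hL e (xk - x')
  have hprox' : L * ‖xk - x'‖ ^ 2 - ⟪f' xk, xk - x'⟫ - ⟪e, xk - x'⟫ ≤ g xk - g x' := by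
    have := mul_le_mul_of_nonneg_left (hinner ▸ hprox) hL.le
    field_simp at this
    linarith
  linarith

/-- Sufficient decrease of the proximal-gradient step with gradient error: if `h = f + g` with
`f` differentiable with `L`-Lipschitz gradient, `g` convex lower-semicontinuous on its domain
`s`, and `x' = prox_{(1/L)g}(x_k - (1/L)(∇f(x_k) + e))` (i.e. `x'` minimizes
`(1/L)g(y) + (1/2)‖y - (x_k - (1/L)(∇f(x_k)+e))‖²` over `s`), then
`h(x') ≤ h(x_k) + (1/L)‖e‖² - (L/4)‖x_k - x'‖²`. -/
theorem stmt13 {n : ℕ} (f : EuclideanSpace ℝ (Fin n) → ℝ)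
    (f' : EuclideanSpace ℝ (Fin n) → EuclideanSpace ℝ (Fin n)) (L : ℝ) (hL : 0 < L)
    (hf : ∀ x, HasGradientAt f (f' x) x)
    (hlip : ∀ x y, ‖f' x - f' y‖ ≤ L * ‖x - y‖)
    (s : Set (EuclideanSpace ℝ (Fin n))) (hs : Convex ℝ s)
    (g : EuclideanSpace ℝ (Fin n) → ℝ) (hg : ConvexOn ℝ s g)
    (hlsc : LowerSemicontinuousOn g s)
    (xk e x' : EuclideanSpace ℝ (Fin n)) (hxk : xk ∈ s) (hx' : x' ∈ s)
    (hmin : ∀ z ∈ s,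
      (1 / L) * g x' + (1 / 2) * ‖x' - (xk - (1 / L) • (f' xk + e))‖ ^ 2 ≤
        (1 / L) * g z + (1 / 2) * ‖z - (xk - (1 / L) • (f' xk + e))‖ ^ 2) :
    f x' + g x' ≤ f xk + g xk + (1 / L) * ‖e‖ ^ 2 - (L / 4) * ‖xk - x'‖ ^ 2 :=
  stmt13_general f f' L hL hf hlip s g hg xk e x' hxk hx' hmin
end

section
/- Let γ̄₀, ..., γ̄_{k-1}: (0,∞) → (0,∞] be convex functions with each log γ̄ᵢ convex and γ̄ᵢ(0⁺) limit 1 (log γ̄ᵢ(0) = 0), let ρ ∈ (0,1), and set R_k = ∑_{i=0}^{k-1} ρ^i. Then for every θ > 0: ∑_{i=0}^{k-1} (ρ^{k-1-i}/R_k) · log γ̄ᵢ(θ R_k) ≥ ∑_{i=0}^{k-1} log γ̄ᵢ(θ ρ^{k-1-i}), and consequently log((1/R_k) ∑_{i=0}^{k-1} ρ^{k-1-i} γ̄ᵢ(θ R_k)) ≥ ∑_{i=0}^{k-1} log γ̄ᵢ(θ ρ^{k-1-i}). -/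
/-!
Since `log γᵢ` is convex with `log γᵢ 0 = 0`, it lies below its chords through the origin:
`log γᵢ (s x) ≤ s log γᵢ x` for `s ∈ [0, 1]`. Taking `x = θ R_k` and `s = ρ^{k-1-i} / R_k`
gives the first inequality. These `s` are nonnegative weights summing to `1`, so concavity of
`log` (Jensen) turns the weighted sum of logarithms into the logarithm of the weighted sum.
-/

open Finset Set

theorem ConvexOn.map_smul_le_smul_of_map_zero {𝕜 E β : Type*} [Ring 𝕜] [PartialOrder 𝕜]
    [IsOrderedRing 𝕜] [AddCommGroup E] [Module 𝕜 E] [AddCommGroup β] [PartialOrder β]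
    [Module 𝕜 β] {s : Set E} {f : E → β} (hf : ConvexOn 𝕜 s f) (h₀s : (0 : E) ∈ s)
    (hf₀ : f 0 = 0) {x : E} (hx : x ∈ s) {t : 𝕜} (ht₀ : 0 ≤ t) (ht₁ : t ≤ 1) :
    f (t • x) ≤ t • f x := by
  simpa [hf₀] using hf.2 hx h₀s ht₀ (sub_nonneg.2 ht₁) (add_sub_cancel t 1)

theorem Real.sum_mul_log_le_log_sum_mul {ι : Type*} {t : Finset ι} {w a : ι → ℝ}
    (hw₀ : ∀ i ∈ t, 0 ≤ w i) (hw₁ : ∑ i ∈ t, w i = 1) (ha : ∀ i ∈ t, 0 < a i) :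
    ∑ i ∈ t, w i * Real.log (a i) ≤ Real.log (∑ i ∈ t, w i * a i) :=
  strictConcaveOn_log_Ioi.concaveOn.le_map_sum hw₀ hw₁ ha

/-- Comparison of cumulant-generating-type bounds: if each `log γᵢ` is convex on `[0,∞)` with
`γᵢ(0) = 1` and `γᵢ > 0`, then with `R_k = ∑_{i<k} ρ^i` and any `θ > 0`,
`∑_{i<k} log γᵢ(θ ρ^{k-1-i}) ≤ ∑_{i<k} (ρ^{k-1-i}/R_k) log γᵢ(θ R_k)` and consequently
`∑_{i<k} log γᵢ(θ ρ^{k-1-i}) ≤ log((1/R_k) ∑_{i<k} ρ^{k-1-i} γᵢ(θ R_k))`. -/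
theorem stmt17 (k : ℕ) (hk : 0 < k) (γ : ℕ → ℝ → ℝ) (ρ : ℝ) (hρ : ρ ∈ Set.Ioo (0:ℝ) 1)
    (hpos : ∀ i θ, 0 ≤ θ → 0 < γ i θ)
    (hconv : ∀ i, ConvexOn ℝ (Set.Ici 0) fun θ => Real.log (γ i θ))
    (h0 : ∀ i, γ i 0 = 1) (θ : ℝ) (hθ : 0 < θ) :
    (∑ i ∈ Finset.range k, Real.log (γ i (θ * ρ ^ (k - 1 - i))) ≤
      ∑ i ∈ Finset.range k, (ρ ^ (k - 1 - i) / ∑ j ∈ Finset.range k, ρ ^ j) *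
        Real.log (γ i (θ * ∑ j ∈ Finset.range k, ρ ^ j))) ∧
    (∑ i ∈ Finset.range k, Real.log (γ i (θ * ρ ^ (k - 1 - i))) ≤
      Real.log ((∑ j ∈ Finset.range k, ρ ^ j)⁻¹ *
        ∑ i ∈ Finset.range k, ρ ^ (k - 1 - i) * γ i (θ * ∑ j ∈ Finset.range k, ρ ^ j))) := by
  have hρ₀ : 0 < ρ := hρ.1
  set R := ∑ j ∈ range k, ρ ^ j
  have hR : 0 < R := sum_pos (fun j _ => pow_pos hρ₀ j) ⟨0, mem_range.2 hk⟩
  have hθR : 0 < θ * R := mul_pos hθ hR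
  have hw₀ : ∀ i ∈ range k, 0 ≤ ρ ^ (k - 1 - i) / R := fun i _ => by positivity
  have hw_le : ∀ i ∈ range k, ρ ^ (k - 1 - i) / R ≤ 1 := fun i hi =>
    div_le_one_of_le₀ (single_le_sum (fun j _ => (pow_pos hρ₀ j).le)
      (mem_range.2 (by grind))) hR.le
  have hw₁ : ∑ i ∈ range k, ρ ^ (k - 1 - i) / R = 1 := by
    rw [← sum_div, sum_range_reflect (ρ ^ ·) k, div_self hR.ne']
  have chord : ∑ i ∈ range k, Real.log (γ i (θ * ρ ^ (k - 1 - i))) ≤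
      ∑ i ∈ range k, ρ ^ (k - 1 - i) / R * Real.log (γ i (θ * R)) := by
    refine sum_le_sum fun i hi => ?_
    have h := (hconv i).map_smul_le_smul_of_map_zero self_mem_Ici (by simp [h0]) hθR.le
      (hw₀ i hi) (hw_le i hi)
    have harg : ρ ^ (k - 1 - i) / R * (θ * R) = θ * ρ ^ (k - 1 - i) := by field_simp
    rwa [smul_eq_mul, smul_eq_mul, harg] at h
  refine ⟨chord, chord.trans ?_⟩
  calc ∑ i ∈ range k, ρ ^ (k - 1 - i) / R * Real.log (γ i (θ * R))
      ≤ Real.log (∑ i ∈ range k, ρ ^ (k - 1 - i) / R * γ i (θ * R)) :=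
        Real.sum_mul_log_le_log_sum_mul hw₀ hw₁ fun i _ => hpos i _ hθR.le
    _ = Real.log (R⁻¹ * ∑ i ∈ range k, ρ ^ (k - 1 - i) * γ i (θ * R)) := by
        simp only [mul_sum, div_eq_inv_mul, mul_assoc]
end
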